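/- arXiv:1705.06022 — 2 statements merged into one kernel-verified Lean document; each statement's English description precedes it below -/
import Mathlib

section
/- If s is a real number and m₁,...,m₃₀ are nonnegative reals with Σ mᵢ = s, Σ mᵢ² ≥ s²/30, and (s-10)(s-20) ≥ 100·(Σ mᵢ² - 2s + 30), then 25 < s < 48. -/
theorem stmt_1 (s : ℝ) (m : Fin 30 → ℝ)
    (hm : ∀ i, 0 ≤ m i) (hs : ∑ i, m i = s)
    (hCS : ∑ i, (m i) ^ 2 ≥ s ^ 2 / 30)
    (h : (s - 10) * (s - 20) ≥ 100 * ((∑ i, (m i) ^ 2) - 2 * s + 30)) :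
    25 < s ∧ s < 48 := by
  have hs0 : 0 ≤ s := by
    rw [← hs]; exact Finset.sum_nonneg fun i _ => hm i
  have key : 7 * s ^ 2 - 510 * s + 8400 ≤ 0 := by nlinarith [hCS, h]
  constructor <;> nlinarith [key, hs0, sq_nonneg (s - 25), sq_nonneg (s - 48)]
end

section
/- There is no plane quartic curve (nonzero homogeneous polynomial of degree 4 in x,y,z over ℂ) vanishing at the fifteen points (0:0:1), (0:1:0), (0:9:5), (1:0:0), (9:0:2), (5:-2:0), (10:10:7), (8:8:7), (-10:10:3), (-8:8:3), (4:7:4), (6:7:6), (-4:11:4), (-6:11:6), (4:1:1). -/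
/-!
The coefficients `c` of a quartic form vanishing at the fifteen points satisfy `M c = 0`, where
`M` is the `15 × 15` matrix of the degree-4 monomials evaluated at the points. `M` has integer
entries and an explicit rational left inverse, which the kernel checks, so `c = 0`.
-/

open MvPolynomial Matrix

namespace MvPolynomial

variable {R : Type*} [CommSemiring R] {k n : ℕ}

theorem IsHomogeneous.eval_eq_sum_antidiagonalTuple {F : MvPolynomial (Fin k) R}
    (hF : F.IsHomogeneous n) (x : Fin k → R) :
    eval x F = ∑ e ∈ Finset.Nat.antidiagonalTuple k n,
      coeff (Finsupp.equivFunOnFinite.symm e) F * ∏ i, x i ^ e i := by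
  rw [eval_eq']
  refine (Finset.sum_subset (fun d hd => ?_) (fun d _ hd => ?_)).trans <|
    Finset.sum_map _ Finsupp.equivFunOnFinite.symm.toEmbedding
      fun d => coeff d F * ∏ i, x i ^ d i
  · have hdeg : d.degree = n := by_contra fun h => mem_support_iff.1 hd (hF.coeff_eq_zero h)
    rw [Finsupp.degree_eq_sum] at hdeg
    exact Finset.mem_map_equiv.2 (Finset.Nat.mem_antidiagonalTuple.2 hdeg)
  · rw [notMem_support_iff.1 hd, zero_mul]

variable {ι : Type*}

def homogeneousEvalMatrix (pts : ι → Fin k → R) (n : ℕ) :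
    Matrix ι (Fin (List.Nat.antidiagonalTuple k n).length) R :=
  of fun i j => ∏ l, pts i l ^ (List.Nat.antidiagonalTuple k n).get j l

noncomputable def homogeneousCoeffs (n : ℕ) (F : MvPolynomial (Fin k) R) :
    Fin (List.Nat.antidiagonalTuple k n).length → R :=
  fun j => coeff (Finsupp.equivFunOnFinite.symm ((List.Nat.antidiagonalTuple k n).get j)) F

theorem homogeneousEvalMatrix_map {S : Type*} [CommSemiring S] (f : R →+* S)
    (pts : ι → Fin k → R) :
    homogeneousEvalMatrix (fun i l => f (pts i l)) n = (homogeneousEvalMatrix pts n).map f := by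
  ext i j
  simp [homogeneousEvalMatrix]

theorem IsHomogeneous.eval_eq_mulVec {F : MvPolynomial (Fin k) R} (hF : F.IsHomogeneous n)
    (pts : ι → Fin k → R) (i : ι) :
    eval (pts i) F = (homogeneousEvalMatrix pts n *ᵥ homogeneousCoeffs n F) i := by
  rw [hF.eval_eq_sum_antidiagonalTuple]
  change ((List.Nat.antidiagonalTuple k n : Multiset (Fin k → ℕ)).map _).sum = _
  rw [Multiset.map_coe, Multiset.sum_coe, ← Fin.sum_univ_fun_getElem]
  simp [mulVec, dotProduct, homogeneousEvalMatrix, homogeneousCoeffs, mul_comm]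

theorem IsHomogeneous.eq_zero_of_homogeneousCoeffs_eq_zero {F : MvPolynomial (Fin k) R}
    (hF : F.IsHomogeneous n) (h : homogeneousCoeffs n F = 0) : F = 0 := by
  ext d
  rw [coeff_zero]
  by_cases hd : d.degree = n
  · rw [Finsupp.degree_eq_sum] at hd
    obtain ⟨j, hj⟩ := List.mem_iff_get.1 (List.Nat.mem_antidiagonalTuple.2 hd)
    have hcoeff := congr_fun h j
    rwa [homogeneousCoeffs, hj, Finsupp.equivFunOnFinite_symm_coe] at hcoeff
  · exact hF.coeff_eq_zero hd

theorem IsHomogeneous.eq_zero_of_forall_eval_eq_zero_of_mul_eq_one [Fintype ι]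
    {F : MvPolynomial (Fin k) R} (hF : F.IsHomogeneous n) {pts : ι → Fin k → R}
    {N : Matrix (Fin (List.Nat.antidiagonalTuple k n).length) ι R}
    (hN : N * homogeneousEvalMatrix pts n = 1) (h : ∀ i, eval (pts i) F = 0) : F = 0 := by
  have hM : homogeneousEvalMatrix pts n *ᵥ homogeneousCoeffs n F = 0 := by
    ext i
    rw [Pi.zero_apply, ← hF.eval_eq_mulVec, h]
  refine hF.eq_zero_of_homogeneousCoeffs_eq_zero ?_
  rw [← one_mulVec (homogeneousCoeffs n F), ← hN, ← mulVec_mulVec, hM, mulVec_zero]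

end MvPolynomial

def quarticPoints : Fin 15 → Fin 3 → ℚ :=
  ![![0, 0, 1], ![0, 1, 0], ![0, 9, 5], ![1, 0, 0], ![9, 0, 2], ![5, -2, 0], ![10, 10, 7],
    ![8, 8, 7], ![-10, 10, 3], ![-8, 8, 3], ![4, 7, 4], ![6, 7, 6], ![-4, 11, 4], ![-6, 11, 6],
    ![4, 1, 1]]

/-- The inverse of `homogeneousEvalMatrix quarticPoints 4`, found by exact Gaussian elimination
over `ℚ`. Its rows are indexed by the exponents `(a, b, c)` of `x^a y^b z^c` in the order of
`List.Nat.antidiagonalTuple 3 4`, i.e. `(0,0,4), (0,1,3), …, (4,0,0)`. -/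
def quarticEvalMatrixInv : Matrix (Fin (List.Nat.antidiagonalTuple 3 4).length) (Fin 15) ℚ :=
  !![1, 0, 0, 0, 0, 0, 0, 0, 0, 0, 0, 0, 0, 0, 0;
    -4777/2664, -197/37, -7/333, 1200/37, 500/8547, -100/259, 283/44030, -249/4144, -67/33670,
      91/6512, -95/11396, 755/6734, 51/11396, -19/13838, -25/37;
    41893/39960, 12445/1332, 47/1998, -3944/111, -4930/76923, 986/2331, -763/113220, 499/7770,
      223/86580, -2393/146520, 91/14652, -14489/121212, -67/12210, 2273/1245420, 493/666;
    -89/444, -3957/740, -7/1110, 360/37, 50/2849, -30/259, 31/17612, -71/4144, -11/13468, 31/6512,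
      -5/5698, 1285/40404, 19/11396, -49/83028, -15/74;
    0, 1, 0, 0, 0, 0, 0, 0, 0, 0, 0, 0, 0, 0, 0;
    1883/6660, -212/37, 4/111, -12840/37, -11240/25641, 848/259, -1231/22015, 1521/4144, 31/16835,
      -785/6512, 70/407, -2180/3367, -6/2849, 196/6919, 212/37;
    -6427/7992, 88967/6660, -1021/19980, 63115/111, 57110/76923, -13309/2331, 35137/396270,
      -9437/15540, 29/23310, 30253/146520, -108161/410256, 20033/18648, -639/227920,
      -125921/2490840, -12421/1332;
    8653/13320, -7127/740, 187/6660, -11577/37, -3649/8547, 4352/1295, -24977/528360, 8525/24864,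
      -1163/404040, -23201/195360, 8941/68376, -24601/40404, 317/68376, 12197/415140, 3797/740;
    -53/333, 2429/1110, -2/333, 2140/37, 2120/25641, -2564/3885, 16/1887, -17/259, 8/10101,
      28/1221, -1405/68376, 2365/20202, -29/22792, -233/41514, -106/111;
    -4213/19980, 29839/13320, -563/39960, 17308/111, 25843/153846, -29839/23310, 61613/3170160,
      -2165/16576, 5947/2424240, 45629/1172160, -44185/820512, 111745/484848, -241/273504,
      -48181/4981680, -29839/13320;
    3415/10656, -10181/2960, 77/5328, -6375/37, -265/1332, 1169/740, -14583/704480, 5051/33152,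
      -1217/230880, -7033/156288, 9333/182336, -87371/323232, 89/26048, 8027/664224, 1459/592;
    -1007/8880, 2713/2220, -19/4440, 1756/37, 1007/17094, -3761/7770, 1943/352240, -3691/82880,
      1751/808080, 5089/390720, -1011/91168, 12833/161616, -67/41440, -5993/1660560, -1007/1480;
    73/3330, -159/740, 1/740, -1629/74, -769/51282, 159/1295, -823/528360, 271/24864, -257/404040,
      -527/195360, 475/136752, -1555/80808, 41/136752, 623/830280, 159/740;
    -53/2664, 15/74, -1/1332, 905/74, 265/25641, -143/1554, 449/528360, -303/41440, 23/31080,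
      301/195360, -157/136752, 27/2072, -101/227920, -151/276760, -53/444;
    0, 0, 0, 1, 0, 0, 0, 0, 0, 0, 0, 0, 0, 0, 0]

theorem quarticEvalMatrixInv_mul :
    quarticEvalMatrixInv * homogeneousEvalMatrix quarticPoints 4 = (1 : Matrix _ _ ℚ) := by
  decide +kernel

theorem stmt_5 :
    ¬ ∃ F : MvPolynomial (Fin 3) ℂ, F ≠ 0 ∧ F.IsHomogeneous 4 ∧
      ∀ p ∈ ([(0,0,1), (0,1,0), (0,9,5), (1,0,0), (9,0,2), (5,-2,0),
              (10,10,7), (8,8,7), (-10,10,3), (-8,8,3), (4,7,4), (6,7,6),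
              (-4,11,4), (-6,11,6), (4,1,1)] : List (ℂ × ℂ × ℂ)),
        MvPolynomial.eval (![p.1, p.2.1, p.2.2]) F = 0 := by
  rintro ⟨F, hF0, hF, heval⟩
  have hN : quarticEvalMatrixInv.map (Rat.castHom ℂ) *
      homogeneousEvalMatrix (fun i l => Rat.castHom ℂ (quarticPoints i l)) 4 =
        (1 : Matrix _ _ ℂ) := by
    rw [homogeneousEvalMatrix_map, ← Matrix.map_mul, quarticEvalMatrixInv_mul,
      Matrix.map_one _ (map_zero _) (map_one _)]
  refine hF0 (hF.eq_zero_of_forall_eval_eq_zero_of_mul_eq_one hN fun i => ?_)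
  convert heval ((quarticPoints i 0 : ℂ), (quarticPoints i 1 : ℂ), (quarticPoints i 2 : ℂ)) ?_
    using 3
  · funext l
    fin_cases l <;> rfl
  · fin_cases i <;> norm_num [quarticPoints, Matrix.cons_val_two]
end
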